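/- Let A = [[1, 1], [0, 1]] and B = [[1, 0], [1, 1]] in SL(2, ℤ). The monoid homomorphism from the free monoid on two generators to SL(2, ℤ) sending one generator to A and the other to B is injective; equivalently, if two finite words in the letters A and B give the same matrix product in SL(2, ℤ), then the words are equal. Hence the submonoid of SL(2, ℤ) consisting of matrices with non-negative entries is a free monoid on the two generators A and B. -/

import Mathlib

/-!
Left multiplication by `A` adds the second row to the first, and by `B` adds the first row to
the second. Hence a non-negative product whose first letter is `A` has its first row dominating
its second entrywise, and one starting with `B` the reverse. Two rows dominating each other would
be equal, impossible at determinant `1`, and neither row of the identity dominates the other; so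
the first letter of a word is read off from its image, and injectivity follows by cancelling it.
Conversely, a non-negative `X ≠ 1` of determinant `1` has a dominating row; subtracting the other
row from it peels off a letter and leaves a non-negative matrix of smaller entry sum (Euclid's
algorithm).
-/

/-- The matrix `A = [[1,1],[0,1]]` as an element of `SL(2, ℤ)`. -/
def slA : Matrix.SpecialLinearGroup (Fin 2) ℤ :=
  ⟨!![1, 1; 0, 1], by simp [Matrix.det_fin_two_of]⟩

/-- The matrix `B = [[1,0],[1,1]]` as an element of `SL(2, ℤ)`. -/
def slB : Matrix.SpecialLinearGroup (Fin 2) ℤ :=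
  ⟨!![1, 0; 1, 1], by simp [Matrix.det_fin_two_of]⟩

open Matrix
open scoped MatrixGroups

namespace Matrix.SpecialLinearGroup

section Nonneg

variable {n R : Type*} [Fintype n] [DecidableEq n] [CommRing R]

variable (n R) in
def nonnegSubmonoid [PartialOrder R] [IsOrderedRing R] : Submonoid (SpecialLinearGroup n R) where
  carrier := {X | ∀ i j, 0 ≤ X i j}
  one_mem' i j := by
    rw [coe_one, one_apply]
    split_ifs <;> simp
  mul_mem' {X Y} hX hY i j := by
    rw [coe_mul, mul_apply]
    exact Finset.sum_nonneg fun k _ => mul_nonneg (hX i k) (hY k j)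

def entrySum (X : SpecialLinearGroup n R) : R := ∑ i, ∑ j, X i j

theorem entrySum_nonneg [PartialOrder R] [IsOrderedRing R] {X : SpecialLinearGroup n R}
    (hX : X ∈ nonnegSubmonoid n R) : 0 ≤ entrySum X :=
  Finset.sum_nonneg fun i _ => Finset.sum_nonneg fun j _ => hX i j

theorem sum_row_pos_of_mem_nonnegSubmonoid [LinearOrder R] [IsStrictOrderedRing R]
    {X : SL(2, R)} (hX : X ∈ nonnegSubmonoid (Fin 2) R) (k : Fin 2) : 0 < ∑ j, X k j := by
  rw [Fin.sum_univ_two]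
  refine (add_nonneg (hX k 0) (hX k 1)).lt_of_ne fun h => not_isCoprime_zero_zero (R := R) ?_
  obtain ⟨h0, h1⟩ := (add_eq_zero_iff_of_nonneg (hX k 0) (hX k 1)).mp h.symm
  simpa [h0, h1] using X.isCoprime_row k

end Nonneg

section RowDominates

variable {R : Type*} [CommRing R] [PartialOrder R]

-- In `Fin 2`, `i + 1` is the index other than `i`.
def RowDominates (X : SL(2, R)) (i : Fin 2) : Prop :=
  ∀ j, X (i + 1) j ≤ X i j

theorem RowDominates.not_succ [Nontrivial R] {X : SL(2, R)} {i : Fin 2} (h : RowDominates X i) :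
    ¬RowDominates X (i + 1) := by
  intro h'
  have hrows : ∀ j, X (i + 1) j = X i j := fun j =>
    le_antisymm (h j) (by simpa [add_assoc] using h' j)
  exact one_ne_zero <| X.det_coe.symm.trans <| det_zero_of_row_eq (by simp) (funext hrows)

theorem not_rowDominates_one [IsOrderedRing R] [Nontrivial R] (i : Fin 2) :
    ¬RowDominates (1 : SL(2, R)) i := by
  intro h
  have h_one_le_zero := h (i + 1)
  simp only [coe_one, one_apply_eq, one_apply_ne (add_ne_left.mpr one_ne_zero).symm] at h_one_le_zero
  exact h_one_le_zero.not_gt zero_lt_one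

end RowDominates

theorem eq_one_of_mem_nonnegSubmonoid_of_lt {X : SL(2, ℤ)} (hX : X ∈ nonnegSubmonoid (Fin 2) ℤ)
    (h01 : X 0 1 < X 1 1) (h10 : X 1 0 < X 0 0) : X = 1 := by
  have hdet : X 0 0 * X 1 1 - X 0 1 * X 1 0 = 1 := by rw [← det_fin_two]; exact X.det_coe
  have h01_nonneg := hX 0 1
  have h10_nonneg := hX 1 0
  -- `(X 0 1 + 1) * (X 1 0 + 1) ≤ X 0 0 * X 1 1 = X 0 1 * X 1 0 + 1`
  have hb : X 0 1 = 0 := by nlinarith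
  have hc : X 1 0 = 0 := by nlinarith
  have had : X 0 0 * X 1 1 = 1 := by simpa [hb] using hdet
  have ha := Int.eq_one_of_mul_eq_one_right (hX 0 0) had
  have hd := Int.eq_one_of_mul_eq_one_left (hX 1 1) had
  ext i j
  fin_cases i <;> fin_cases j <;> simp [ha, hb, hc, hd]

theorem exists_rowDominates_of_mem_nonnegSubmonoid {X : SL(2, ℤ)}
    (hX : X ∈ nonnegSubmonoid (Fin 2) ℤ) (h1 : X ≠ 1) : ∃ i, RowDominates X i := by
  by_contra! hnd
  have hlt01 : X 0 0 < X 1 0 ∨ X 0 1 < X 1 1 := by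
    simpa only [RowDominates, not_forall, not_le, zero_add, Fin.exists_fin_two] using hnd 0
  have hlt10 : X 1 0 < X 0 0 ∨ X 1 1 < X 0 1 := by
    simpa only [RowDominates, not_forall, not_le, Fin.reduceAdd, Fin.exists_fin_two] using hnd 1
  have hdet : X 0 0 * X 1 1 - X 0 1 * X 1 0 = 1 := by rw [← det_fin_two]; exact X.det_coe
  rcases hlt01 with hlt01 | hlt01 <;> rcases hlt10 with hlt10 | hlt10
  · exact hlt01.not_gt hlt10
  · nlinarith [mul_le_mul_of_nonneg_right hlt01.le (hX 1 1),
      mul_le_mul_of_nonneg_left hlt10.le (hX 1 0)]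
  · exact h1 (eq_one_of_mem_nonnegSubmonoid_of_lt hX hlt01 hlt10)
  · exact hlt01.not_gt hlt10

end Matrix.SpecialLinearGroup

open Matrix.SpecialLinearGroup

abbrev abGen : Fin 2 → SL(2, ℤ) := ![slA, slB]

abbrev abEval : FreeMonoid (Fin 2) →* SL(2, ℤ) := FreeMonoid.lift abGen

section Generators

variable (i : Fin 2) (Y : SL(2, ℤ))

theorem abGen_mul_apply_self (j : Fin 2) : (abGen i * Y) i j = Y i j + Y (i + 1) j := by
  rw [coe_mul]
  fin_cases i <;> simp [mul_apply, Fin.sum_univ_two, slA, slB, add_comm]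

theorem abGen_mul_apply_succ (j : Fin 2) : (abGen i * Y) (i + 1) j = Y (i + 1) j := by
  rw [coe_mul]
  fin_cases i <;> simp [mul_apply, Fin.sum_univ_two, slA, slB]

theorem entrySum_abGen_mul : entrySum (abGen i * Y) = entrySum Y + ∑ j, Y (i + 1) j := by
  simp only [entrySum, coe_mul]
  fin_cases i <;> simp [mul_apply, Fin.sum_univ_two, slA, slB] <;> ring

theorem abGen_mem_nonnegSubmonoid : abGen i ∈ nonnegSubmonoid (Fin 2) ℤ := by
  intro k l
  fin_cases i <;> fin_cases k <;> fin_cases l <;> simp [slA, slB]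

variable {i Y}

theorem rowDominates_abGen_mul (hY : Y ∈ nonnegSubmonoid (Fin 2) ℤ) :
    RowDominates (abGen i * Y) i := fun j => by
  rw [abGen_mul_apply_self, abGen_mul_apply_succ]
  exact le_add_of_nonneg_left (hY i j)

theorem inv_abGen_mul_mem_nonnegSubmonoid (hY : Y ∈ nonnegSubmonoid (Fin 2) ℤ)
    (hi : RowDominates Y i) : (abGen i)⁻¹ * Y ∈ nonnegSubmonoid (Fin 2) ℤ := by
  set Z := (abGen i)⁻¹ * Y
  have hYZ : Y = abGen i * Z := (mul_inv_cancel_left _ _).symm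
  intro k j
  obtain rfl | rfl : k = i ∨ k = i + 1 := by omega
  · have hdom := hi j
    rw [hYZ, abGen_mul_apply_self, abGen_mul_apply_succ] at hdom
    linarith
  · simpa [hYZ, abGen_mul_apply_succ] using hY (i + 1) j

end Generators

theorem mrange_abEval_le : MonoidHom.mrange abEval ≤ nonnegSubmonoid (Fin 2) ℤ := by
  rw [FreeMonoid.mrange_lift, Submonoid.closure_le]
  rintro _ ⟨i, rfl⟩
  exact abGen_mem_nonnegSubmonoid i

theorem rowDominates_abEval_of_mul (i : Fin 2) (w : FreeMonoid (Fin 2)) :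
    RowDominates (abEval (.of i * w)) i := by
  rw [map_mul, FreeMonoid.lift_eval_of]
  exact rowDominates_abGen_mul (mrange_abEval_le ⟨w, rfl⟩)

theorem abEval_of_mul_ne_one (i : Fin 2) (w : FreeMonoid (Fin 2)) : abEval (.of i * w) ≠ 1 :=
  fun h => not_rowDominates_one i (h ▸ rowDominates_abEval_of_mul i w)

theorem eq_of_abEval_of_mul_eq {i j : Fin 2} {w v : FreeMonoid (Fin 2)}
    (h : abEval (.of i * w) = abEval (.of j * v)) : i = j := by
  by_contra hij
  obtain rfl : j = i + 1 := by omega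
  exact (rowDominates_abEval_of_mul i w).not_succ (h ▸ rowDominates_abEval_of_mul (i + 1) v)

theorem abEval_injective : Function.Injective abEval := by
  intro w
  induction w using FreeMonoid.recOn with
  | one =>
    intro v h
    cases v using FreeMonoid.casesOn with
    | one => rfl
    | of_mul j v => exact absurd h.symm (map_one abEval ▸ abEval_of_mul_ne_one j v)
  | of_mul i w ih =>
    intro v h
    cases v using FreeMonoid.casesOn with
    | one => exact absurd h (map_one abEval ▸ abEval_of_mul_ne_one i w)
    | of_mul j v =>
      obtain rfl := eq_of_abEval_of_mul_eq h
      rw [map_mul, map_mul] at h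
      rw [ih (mul_left_cancel h)]

theorem mem_mrange_abEval_of_mem_nonnegSubmonoid {X : SL(2, ℤ)}
    (hX : X ∈ nonnegSubmonoid (Fin 2) ℤ) : X ∈ MonoidHom.mrange abEval := by
  by_cases h1 : X = 1
  · exact h1 ▸ one_mem _
  obtain ⟨i, hi⟩ := exists_rowDominates_of_mem_nonnegSubmonoid hX h1
  have hY := inv_abGen_mul_mem_nonnegSubmonoid hX hi
  have hXY : X = abGen i * ((abGen i)⁻¹ * X) := (mul_inv_cancel_left _ _).symm
  rw [hXY]
  exact mul_mem ⟨.of i, FreeMonoid.lift_eval_of _ _⟩ (mem_mrange_abEval_of_mem_nonnegSubmonoid hY)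
termination_by (entrySum X).toNat
decreasing_by
  have hsum := entrySum_abGen_mul i ((abGen i)⁻¹ * X)
  rw [← hXY] at hsum
  have hrow := sum_row_pos_of_mem_nonnegSubmonoid hY (i + 1)
  have hnonneg := entrySum_nonneg hY
  omega

theorem mrange_abEval : MonoidHom.mrange abEval = nonnegSubmonoid (Fin 2) ℤ :=
  mrange_abEval_le.antisymm fun _ => mem_mrange_abEval_of_mem_nonnegSubmonoid

/-- The monoid homomorphism from the free monoid on two generators to `SL(2, ℤ)`
sending the generators to `A = [[1,1],[0,1]]` and `B = [[1,0],[1,1]]` is injective, and its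
range is exactly the submonoid of matrices with non-negative entries.  Hence that submonoid
is a free monoid on `A` and `B`. -/
theorem sl2_nonneg_free_monoid_on_AB :
    Function.Injective
        (FreeMonoid.lift (![slA, slB] : Fin 2 → Matrix.SpecialLinearGroup (Fin 2) ℤ)) ∧
    Set.range (FreeMonoid.lift (![slA, slB] : Fin 2 → Matrix.SpecialLinearGroup (Fin 2) ℤ))
      = {X : Matrix.SpecialLinearGroup (Fin 2) ℤ |
          ∀ i j, 0 ≤ (X : Matrix (Fin 2) (Fin 2) ℤ) i j} :=
  ⟨abEval_injective, congrArg SetLike.coe mrange_abEval⟩
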